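/- A univariate polynomial p is nonnegative on the interval [a, b] (with a < b) if and only if there exist sums of squares polynomials σ_0, σ_1 such that p(x) = σ_0(x) + (x − a)(b − x) σ_1(x) when deg p is even, or p(x) = (x − a) σ_0(x) + (b − x) σ_1(x) when deg p is odd. -/

import Mathlib

/-!
Both sides describe the preordering `T` of `ℝ[X]` generated by `(X - a)(b - X)`: the identity
`(b - a) p = (X - a) p + (b - X) p` turns one representation into the other, and `X - a`,
`b - X` lie in `T`. A polynomial that is nonnegative on `[a, b]` lies in `T` by induction on its
degree. A nonconstant such `p` has a factor `f ∈ T` of positive degree: `X - r` for a root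
`r ≤ a`, `r - X` for a root `r ≥ b`, `(X - r)²` for a root `r ∈ (a, b)` (a local minimum of `p`,
hence a double root), and the positive quadratic `(X - z)(X - z̄)` for a non-real root `z`. Since
`f ≥ 0` on `[a, b]` with only finitely many zeros, the quotient `p / f` is again nonnegative
there by continuity.
-/

open Polynomial Set

namespace Polynomial

variable {a b : ℝ}

theorem isSumSq_C {c : ℝ} (hc : 0 ≤ c) : IsSumSq (C c) :=
  IsSquare.isSumSq ⟨C √c, by rw [← C_mul, Real.mul_self_sqrt hc]⟩

theorem IsSumSq.eval_nonneg {p : ℝ[X]} (hp : IsSumSq p) (x : ℝ) : 0 ≤ p.eval x := by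
  induction hp with
  | zero => simp
  | sq_add q _ ih => simpa only [eval_add, eval_mul] using add_nonneg (mul_self_nonneg _) ih

theorem isSumSq_X_sq_sub_C_mul_X_add_C (z : ℂ) :
    IsSumSq (X ^ 2 - C (2 * z.re) * X + C (‖z‖ ^ 2)) := by
  have h : X ^ 2 - C (2 * z.re) * X + C (‖z‖ ^ 2) =
      (X - C z.re) * (X - C z.re) + C z.im * C z.im := by
    rw [Complex.sq_norm, Complex.normSq_apply]
    simp only [C_add, C_mul, C_ofNat]
    ring
  rw [h]
  exact .add (.mul_self _) (.mul_self _)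

theorem X_sub_C_sq_dvd_of_isLocalMin {p : ℝ[X]} {r : ℝ}
    (hmin : IsLocalMin (fun x ↦ p.eval x) r) (hr : p.IsRoot r) : (X - C r) ^ 2 ∣ p := by
  rcases eq_or_ne p 0 with rfl | hp0
  · exact dvd_zero _
  have hder : p.derivative.IsRoot r := by
    rw [IsRoot, ← Polynomial.deriv]
    exact hmin.deriv_eq_zero
  exact (le_rootMultiplicity_iff hp0).1 ((one_lt_rootMultiplicity_iff_isRoot hp0).2 ⟨hr, hder⟩)

theorem eval_nonneg_of_eval_mul_nonneg (hab : a < b) {f q : ℝ[X]} (hf0 : f ≠ 0)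
    (hf : ∀ x ∈ Icc a b, 0 ≤ f.eval x) (hfq : ∀ x ∈ Icc a b, 0 ≤ (f * q).eval x) :
    ∀ x ∈ Icc a b, 0 ≤ q.eval x := by
  have hdense : Dense {x | f.eval x ≠ 0} :=
    (finite_setOfPred_isRoot hf0).countable.dense_compl ℝ
  have hsub : Ioo a b ∩ {x | f.eval x ≠ 0} ⊆ {x | 0 ≤ q.eval x} := by
    rintro x ⟨hx, hfx⟩
    have hx' := Ioo_subset_Icc_self hx
    exact nonneg_of_mul_nonneg_right (by simpa only [eval_mul] using hfq x hx')
      ((hf x hx').lt_of_ne' hfx)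
  calc Icc a b = closure (Ioo a b) := (closure_Ioo hab.ne).symm
    _ ⊆ closure (Ioo a b ∩ {x | f.eval x ≠ 0}) :=
      closure_minimal (hdense.open_subset_closure_inter isOpen_Ioo) isClosed_closure
    _ ⊆ {x | 0 ≤ q.eval x} := closure_minimal hsub (isClosed_le continuous_const q.continuous)

variable (a b) in
def iccPreordering : Subsemiring ℝ[X] where
  carrier := {p | ∃ σ₀ σ₁ : ℝ[X], IsSumSq σ₀ ∧ IsSumSq σ₁ ∧ p = σ₀ + (X - C a) * (C b - X) * σ₁}
  zero_mem' := ⟨0, 0, .zero, .zero, by ring⟩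
  one_mem' := ⟨1, 0, .one, .zero, by ring⟩
  add_mem' := by
    rintro _ _ ⟨s₀, s₁, hs₀, hs₁, rfl⟩ ⟨t₀, t₁, ht₀, ht₁, rfl⟩
    exact ⟨s₀ + t₀, s₁ + t₁, hs₀.add ht₀, hs₁.add ht₁, by ring⟩
  mul_mem' := by
    rintro _ _ ⟨s₀, s₁, hs₀, hs₁, rfl⟩ ⟨t₀, t₁, ht₀, ht₁, rfl⟩
    set g : ℝ[X] := (X - C a) * (C b - X)
    exact ⟨s₀ * t₀ + g * g * (s₁ * t₁), s₀ * t₁ + s₁ * t₀,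
      (hs₀.mul ht₀).add ((IsSumSq.mul_self g).mul (hs₁.mul ht₁)),
      (hs₀.mul ht₁).add (hs₁.mul ht₀), by ring⟩

theorem mem_iccPreordering {p : ℝ[X]} : p ∈ iccPreordering a b ↔
    ∃ σ₀ σ₁ : ℝ[X], IsSumSq σ₀ ∧ IsSumSq σ₁ ∧ p = σ₀ + (X - C a) * (C b - X) * σ₁ :=
  Iff.rfl

theorem IsSumSq.mem_iccPreordering {p : ℝ[X]} (hp : IsSumSq p) : p ∈ iccPreordering a b :=
  ⟨p, 0, hp, .zero, by ring⟩

theorem eval_nonneg_of_mem_iccPreordering {p : ℝ[X]} (hp : p ∈ iccPreordering a b) {x : ℝ}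
    (hx : x ∈ Icc a b) : 0 ≤ p.eval x := by
  obtain ⟨σ₀, σ₁, hσ₀, hσ₁, rfl⟩ := hp
  simp only [eval_add, eval_mul, eval_sub, eval_X, eval_C]
  have := mul_nonneg (sub_nonneg.2 hx.1) (sub_nonneg.2 hx.2)
  exact add_nonneg (hσ₀.eval_nonneg x) (mul_nonneg this (hσ₁.eval_nonneg x))

theorem C_inv_sub_mul_C_sub_C (hab : a < b) : C (b - a)⁻¹ * (C b - C a) = 1 := by
  rw [← C_sub, ← C_mul, inv_mul_cancel₀ (sub_ne_zero.2 hab.ne'), C_1]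

theorem X_sub_C_mem_iccPreordering (hab : a < b) {r : ℝ} (hr : r ≤ a) :
    X - C r ∈ iccPreordering a b := by
  have hu := isSumSq_C (inv_nonneg.2 (sub_nonneg.2 hab.le))
  have hXa : X - C a ∈ iccPreordering a b :=
    ⟨C (b - a)⁻¹ * ((X - C a) * (X - C a)), C (b - a)⁻¹, hu.mul (.mul_self _), hu, by
      linear_combination (-(X - C a)) * C_inv_sub_mul_C_sub_C hab⟩
  have hXr : X - C r = (X - C a) + C (a - r) := by rw [C_sub]; ring
  rw [hXr]
  exact add_mem hXa (isSumSq_C (sub_nonneg.2 hr)).mem_iccPreordering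

theorem C_sub_X_mem_iccPreordering (hab : a < b) {r : ℝ} (hr : b ≤ r) :
    C r - X ∈ iccPreordering a b := by
  have hu := isSumSq_C (inv_nonneg.2 (sub_nonneg.2 hab.le))
  have hbX : C b - X ∈ iccPreordering a b :=
    ⟨C (b - a)⁻¹ * ((C b - X) * (C b - X)), C (b - a)⁻¹, hu.mul (.mul_self _), hu, by
      linear_combination (-(C b - X)) * C_inv_sub_mul_C_sub_C hab⟩
  have hrX : C r - X = (C b - X) + C (r - b) := by rw [C_sub]; ring
  rw [hrX]
  exact add_mem hbX (isSumSq_C (sub_nonneg.2 hr)).mem_iccPreordering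

theorem mem_iccPreordering_iff_exists_linear (hab : a < b) {p : ℝ[X]} :
    p ∈ iccPreordering a b ↔
      ∃ σ₀ σ₁ : ℝ[X], IsSumSq σ₀ ∧ IsSumSq σ₁ ∧ p = (X - C a) * σ₀ + (C b - X) * σ₁ := by
  constructor
  · rintro ⟨σ₀, σ₁, hσ₀, hσ₁, rfl⟩
    have hu := isSumSq_C (inv_nonneg.2 (sub_nonneg.2 hab.le))
    refine ⟨C (b - a)⁻¹ * (σ₀ + (C b - X) * (C b - X) * σ₁),
      C (b - a)⁻¹ * (σ₀ + (X - C a) * (X - C a) * σ₁),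
      hu.mul (hσ₀.add ((IsSumSq.mul_self _).mul hσ₁)),
      hu.mul (hσ₀.add ((IsSumSq.mul_self _).mul hσ₁)), ?_⟩
    linear_combination (-(σ₀ + (X - C a) * (C b - X) * σ₁)) * C_inv_sub_mul_C_sub_C hab
  · rintro ⟨σ₀, σ₁, hσ₀, hσ₁, rfl⟩
    exact add_mem (mul_mem (X_sub_C_mem_iccPreordering hab le_rfl) hσ₀.mem_iccPreordering)
      (mul_mem (C_sub_X_mem_iccPreordering hab le_rfl) hσ₁.mem_iccPreordering)

theorem exists_dvd_mem_iccPreordering_of_isRoot (hab : a < b) {p : ℝ[X]}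
    (hp : ∀ x ∈ Icc a b, 0 ≤ p.eval x) {r : ℝ} (hr : p.IsRoot r) :
    ∃ f ∈ iccPreordering a b, 0 < f.natDegree ∧ f ∣ p := by
  rcases le_or_gt r a with hra | har
  · exact ⟨X - C r, X_sub_C_mem_iccPreordering hab hra, by simp, dvd_iff_isRoot.2 hr⟩
  rcases le_or_gt b r with hbr | hrb
  · refine ⟨C r - X, C_sub_X_mem_iccPreordering hab hbr, ?_, ?_⟩
    · rw [← neg_sub, natDegree_neg, natDegree_X_sub_C]
      exact one_pos
    · rw [← neg_sub, neg_dvd]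
      exact dvd_iff_isRoot.2 hr
  · have hmin : IsLocalMin (fun x ↦ p.eval x) r :=
      (isMinOn_iff.2 fun x hx ↦ hr.eq_zero ▸ hp x hx).isLocalMin (Icc_mem_nhds har hrb)
    refine ⟨(X - C r) ^ 2, ?_, by simp, X_sub_C_sq_dvd_of_isLocalMin hmin hr⟩
    rw [sq]
    exact (IsSumSq.mul_self _).mem_iccPreordering

theorem exists_dvd_mem_iccPreordering (hab : a < b) {p : ℝ[X]}
    (hp : ∀ x ∈ Icc a b, 0 ≤ p.eval x) (hdeg : 0 < p.natDegree) :
    ∃ f ∈ iccPreordering a b, 0 < f.natDegree ∧ f ∣ p := by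
  obtain ⟨z, hz⟩ : ∃ z : ℂ, aeval z p = 0 :=
    IsAlgClosed.exists_aeval_eq_zero ℂ p (natDegree_pos_iff_degree_pos.1 hdeg).ne'
  by_cases him : z.im = 0
  · have hre : (z.re : ℂ) = z := Complex.ext rfl (by simpa using him.symm)
    have hr : p.IsRoot z.re := by
      rw [← hre, ← Complex.coe_algebraMap, aeval_algebraMap_apply_eq_algebraMap_eval,
        Complex.coe_algebraMap] at hz
      exact_mod_cast hz
    exact exists_dvd_mem_iccPreordering_of_isRoot hab hp hr
  · have hdeg₂ : (X ^ 2 - C (2 * z.re) * X + C (‖z‖ ^ 2) : ℝ[X]).natDegree = 2 := by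
      compute_degree!
    exact ⟨_, (isSumSq_X_sq_sub_C_mul_X_add_C z).mem_iccPreordering, by rw [hdeg₂]; exact two_pos,
      p.quadratic_dvd_of_aeval_eq_zero_im_ne_zero hz him⟩

theorem mem_iccPreordering_of_nonneg (hab : a < b) {p : ℝ[X]}
    (hp : ∀ x ∈ Icc a b, 0 ≤ p.eval x) : p ∈ iccPreordering a b := by
  induction h : p.natDegree using Nat.strong_induction_on generalizing p with
  | _ n ih =>
  rcases Nat.eq_zero_or_pos n with hn | hn
  · have hpa := hp a (left_mem_Icc.2 hab.le)
    rw [eq_C_of_natDegree_eq_zero (h.trans hn), eval_C] at hpa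
    rw [eq_C_of_natDegree_eq_zero (h.trans hn)]
    exact (isSumSq_C hpa).mem_iccPreordering
  obtain ⟨f, hfT, hfdeg, q, rfl⟩ := exists_dvd_mem_iccPreordering hab hp (h ▸ hn)
  have hf0 : f ≠ 0 := ne_zero_of_natDegree_gt hfdeg
  have hq0 : q ≠ 0 := by
    rintro rfl
    simp only [mul_zero, natDegree_zero] at h
    omega
  have hqdeg : q.natDegree < n := by
    rw [← h, natDegree_mul hf0 hq0]
    omega
  exact mul_mem hfT (ih _ hqdeg (eval_nonneg_of_eval_mul_nonneg hab hf0
    (fun x hx ↦ eval_nonneg_of_mem_iccPreordering hfT hx) hp) rfl)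

end Polynomial

open Polynomial in
theorem stmt_9 (p : Polynomial ℝ) (a b : ℝ) (hab : a < b) :
    (∀ x ∈ Set.Icc a b, 0 ≤ p.eval x) ↔
      (if Even p.natDegree then
        ∃ σ0 σ1 : Polynomial ℝ, IsSumSq σ0 ∧ IsSumSq σ1 ∧
          p = σ0 + (X - C a) * (C b - X) * σ1
      else
        ∃ σ0 σ1 : Polynomial ℝ, IsSumSq σ0 ∧ IsSumSq σ1 ∧
          p = (X - C a) * σ0 + (C b - X) * σ1) := by
  have hT : (∀ x ∈ Icc a b, 0 ≤ p.eval x) ↔ p ∈ iccPreordering a b :=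
    ⟨mem_iccPreordering_of_nonneg hab, fun hp _ ↦ eval_nonneg_of_mem_iccPreordering hp⟩
  split_ifs
  · exact hT.trans mem_iccPreordering
  · exact hT.trans (mem_iccPreordering_iff_exists_linear hab)
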